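/- arXiv:1209.1233 — 2 statements merged into one kernel-verified Lean document; each statement's English description precedes it below -/
import Mathlib

section
/- A finite simple connected graph Γ is a nondegenerate line graph (i.e., Γ is a line graph of some connected graph and the adjacency matrix of Γ over F₂ is invertible) if and only if Γ is the line graph of a tree of odd order. -/
/-!
Over `F₂` the adjacency matrix of the line graph `L(G)` is `Mᵀ M`, where `M` is the vertex–edge
incidence matrix of `G`: two distinct edges share at most one endpoint, and each edge shares
`2 = 0` endpoints with itself. The kernel of `M` is the cycle space, so `M` is injective iff `G`
is acyclic. For connected `G` the kernel of `Mᵀ` consists of the constant vectors, while the image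
of `M` contains every `δᵤ + δᵥ` and consists of vectors of even weight; hence the all-ones vector
lies in the image of `M` iff `|V|` is even. So `Mᵀ M` is invertible iff `G` is a tree of odd order.
-/

open Matrix

namespace SimpleGraph

variable {V : Type*} {G : SimpleGraph V}

lemma Reachable.eq_of_forall_adj {α : Type*} {f : V → α} (hf : ∀ a b, G.Adj a b → f a = f b)
    {u v : V} (h : G.Reachable u v) : f u = f v := by
  obtain ⟨p⟩ := h
  induction p with
  | nil => rfl
  | cons hadj _ ih => exact (hf _ _ hadj).trans ih

variable (G) in
open Classical in
noncomputable def edgeIncMatrix : Matrix V G.edgeSet (ZMod 2) :=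
  of fun v e => if v ∈ (e : Sym2 V) then 1 else 0

open Classical in
lemma edgeIncMatrix_apply (v : V) (e : G.edgeSet) :
    G.edgeIncMatrix v e = if v ∈ (e : Sym2 V) then 1 else 0 := rfl

lemma edgeIncMatrix_col [DecidableEq V] {a b : V} (h : s(a, b) ∈ G.edgeSet) :
    G.edgeIncMatrix.col ⟨s(a, b), h⟩ = Pi.single a 1 + Pi.single b 1 := by
  have hab : a ≠ b := (G.mem_edgeSet.mp h).ne
  funext v
  by_cases hva : v = a <;> by_cases hvb : v = b <;>
    simp [edgeIncMatrix_apply, hva, hvb, hab, hab.symm]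

section EdgeFintype

variable [Fintype G.edgeSet]

lemma edgeIncMatrix_mulVec_single [DecidableEq V] [DecidableEq G.edgeSet]
    {a b : V} (h : s(a, b) ∈ G.edgeSet) :
    G.edgeIncMatrix *ᵥ Pi.single ⟨s(a, b), h⟩ 1 = Pi.single a 1 + Pi.single b 1 := by
  rw [mulVec_single_one, edgeIncMatrix_col]

lemma exists_edgeIncMatrix_mulVec_eq [DecidableEq V] {u v : V} (p : G.Walk u v) :
    ∃ z : G.edgeSet → ZMod 2, G.edgeIncMatrix *ᵥ z = Pi.single u 1 + Pi.single v 1 ∧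
      ∀ e, z e ≠ 0 → (e : Sym2 V) ∈ p.edges := by
  classical
  induction p with
  | nil => exact ⟨0, by rw [mulVec_zero, ZModModule.add_self], by simp⟩
  | @cons a b c hab p ih =>
    obtain ⟨z, hz, hsupp⟩ := ih
    refine ⟨Pi.single ⟨s(a, b), G.mem_edgeSet.mpr hab⟩ 1 + z, ?_, fun e he => ?_⟩
    · rw [mulVec_add, edgeIncMatrix_mulVec_single, hz, ZModModule.add_add_add_cancel]
    · rw [Walk.edges_cons, List.mem_cons]
      by_cases h : e = ⟨s(a, b), G.mem_edgeSet.mpr hab⟩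
      · exact Or.inl (congrArg Subtype.val h)
      · rw [Pi.add_apply, Pi.single_eq_of_ne h, zero_add] at he
        exact Or.inr (hsupp e he)

end EdgeFintype

variable [Fintype V]

lemma vecMul_edgeIncMatrix_apply (x : V → ZMod 2) {a b : V} (h : s(a, b) ∈ G.edgeSet) :
    (x ᵥ* G.edgeIncMatrix) ⟨s(a, b), h⟩ = x a + x b := by
  classical
  change x ⬝ᵥ G.edgeIncMatrix.col _ = _
  rw [edgeIncMatrix_col h, dotProduct_add, dotProduct_single, dotProduct_single, mul_one, mul_one]

lemma vecMul_edgeIncMatrix_one : (1 : V → ZMod 2) ᵥ* G.edgeIncMatrix = 0 := by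
  funext ⟨e, he⟩
  induction e with
  | _ a b =>
    rw [vecMul_edgeIncMatrix_apply _ he]
    exact ZModModule.add_self (1 : ZMod 2)

lemma transpose_edgeIncMatrix_mulVec_eq_zero_iff (x : V → ZMod 2) :
    G.edgeIncMatrixᵀ *ᵥ x = 0 ↔ ∀ a b, G.Adj a b → x a = x b := by
  rw [mulVec_transpose]
  constructor
  · intro h a b hab
    have := congrFun h ⟨s(a, b), G.mem_edgeSet.mpr hab⟩
    rwa [vecMul_edgeIncMatrix_apply, Pi.zero_apply, add_eq_zero_iff_eq_neg,
      ZModModule.neg_eq_self] at this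
  · intro h
    funext ⟨e, he⟩
    induction e with
    | _ a b => rw [vecMul_edgeIncMatrix_apply _ he, h a b he, Pi.zero_apply, ZModModule.add_self]

lemma adjMatrix_lineGraph [DecidableRel G.lineGraph.Adj] :
    G.lineGraph.adjMatrix (ZMod 2) = G.edgeIncMatrixᵀ * G.edgeIncMatrix := by
  classical
  ext ⟨e, he⟩ f
  induction e with
  | _ a b =>
  have hab : a ≠ b := (G.mem_edgeSet.mp he).ne
  have hentry : (G.edgeIncMatrixᵀ * G.edgeIncMatrix) ⟨s(a, b), he⟩ f =
      G.edgeIncMatrix a f + G.edgeIncMatrix b f := by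
    rw [← vecMul_edgeIncMatrix_apply (fun v => G.edgeIncMatrix v f) he]
    simp only [mul_apply, transpose_apply, vecMul, dotProduct, mul_comm]
  rw [hentry]
  simp only [adjMatrix_apply, lineGraph_adj_iff_exists, edgeIncMatrix_apply]
  by_cases hef : f = ⟨s(a, b), he⟩
  · subst hef
    simp [ZModModule.add_self]
  · have hne : (f : Sym2 V) ≠ s(a, b) := fun h => hef (Subtype.ext h)
    have : ¬(a ∈ (f : Sym2 V) ∧ b ∈ (f : Sym2 V)) := fun h => hne ((Sym2.mem_and_mem_iff hab).mp h)
    by_cases ha : a ∈ (f : Sym2 V) <;> by_cases hb : b ∈ (f : Sym2 V) <;> simp_all [Ne.symm hef]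

lemma exists_vecMul_edgeIncMatrix_eq_single_of_isBridge [DecidableEq G.edgeSet]
    {a b : V} (h : s(a, b) ∈ G.edgeSet) (hbr : G.IsBridge s(a, b)) :
    ∃ f : V → ZMod 2, f ᵥ* G.edgeIncMatrix = Pi.single ⟨s(a, b), h⟩ 1 := by
  classical
  set H := G.deleteEdges {s(a, b)}
  refine ⟨fun v => if H.Reachable a v then 1 else 0, funext fun ⟨e, he⟩ => ?_⟩
  induction e with
  | _ c d =>
  by_cases hcd : s(c, d) = s(a, b)
  · have hsep : ¬H.Reachable a b := isBridge_iff.mp hbr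
    rw [show (⟨s(c, d), he⟩ : G.edgeSet) = ⟨s(a, b), h⟩ from Subtype.ext hcd,
      vecMul_edgeIncMatrix_apply _ h, Pi.single_eq_same, if_pos Reachable.rfl, if_neg hsep,
      add_zero]
  · have hH : H.Adj c d := deleteEdges_adj.mpr ⟨he, hcd⟩
    have : H.Reachable a c ↔ H.Reachable a d :=
      ⟨fun h => h.trans hH.reachable, fun h => h.trans hH.symm.reachable⟩
    rw [vecMul_edgeIncMatrix_apply _ he, Pi.single_eq_of_ne (fun h => hcd (congrArg Subtype.val h)),
      if_congr this rfl rfl, ZModModule.add_self]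

variable [Fintype G.edgeSet]

lemma sum_edgeIncMatrix_mulVec (z : G.edgeSet → ZMod 2) :
    ∑ v, (G.edgeIncMatrix *ᵥ z) v = 0 := by
  rw [← one_dotProduct, dotProduct_mulVec, vecMul_edgeIncMatrix_one, zero_dotProduct]

lemma isAcyclic_iff_injective_edgeIncMatrix_mulVec :
    G.IsAcyclic ↔ Function.Injective G.edgeIncMatrix.mulVec := by
  classical
  rw [← coe_mulVecLin, injective_iff_map_eq_zero, isAcyclic_iff_forall_isBridge]
  simp only [mulVecLin_apply]
  constructor
  · intro hG z hz
    funext ⟨e, he⟩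
    induction e with
    | _ a b =>
    obtain ⟨f, hf⟩ := exists_vecMul_edgeIncMatrix_eq_single_of_isBridge he (hG he)
    simpa [dotProduct_mulVec, hf, single_dotProduct] using congrArg (f ⬝ᵥ ·) hz
  · intro hinj e he
    induction e with
    | _ a b =>
    rw [isBridge_iff_forall_walk_mem_edges]
    by_contra! ⟨p, hp⟩
    obtain ⟨z, hz, hsupp⟩ := exists_edgeIncMatrix_mulVec_eq p
    have hcycle := hinj (Pi.single ⟨s(a, b), he⟩ 1 + z) (by
      rw [mulVec_add, edgeIncMatrix_mulVec_single, hz, ZModModule.add_self])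
    have hz0 : z ⟨s(a, b), he⟩ = 0 := by
      by_contra h
      exact hp (hsupp _ h)
    simpa [hz0] using congrFun hcycle ⟨s(a, b), he⟩

lemma Connected.exists_edgeIncMatrix_mulVec_eq_one (hG : G.Connected)
    (heven : Even (Fintype.card V)) : ∃ z : G.edgeSet → ZMod 2, G.edgeIncMatrix *ᵥ z = 1 := by
  classical
  obtain ⟨u₀⟩ := hG.nonempty
  choose z hz using fun u => exists_edgeIncMatrix_mulVec_eq (hG.preconnected u₀ u).some
  refine ⟨∑ u, z u, ?_⟩
  rw [← coe_mulVecLin, map_sum]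
  simp only [coe_mulVecLin, fun u => (hz u).1, Finset.sum_add_distrib, Finset.sum_const,
    Finset.card_univ, Finset.univ_sum_single]
  obtain ⟨k, hk⟩ := heven
  rw [hk, add_nsmul, ZModModule.add_self, zero_add]
  rfl

lemma Connected.edgeIncMatrix_mulVec_eq_zero (hG : G.Connected)
    (hodd : Odd (Fintype.card V)) {z : G.edgeSet → ZMod 2}
    (hz : G.edgeIncMatrixᵀ *ᵥ (G.edgeIncMatrix *ᵥ z) = 0) : G.edgeIncMatrix *ᵥ z = 0 := by
  obtain ⟨u₀⟩ := hG.nonempty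
  have hconst : ∀ v, (G.edgeIncMatrix *ᵥ z) v = (G.edgeIncMatrix *ᵥ z) u₀ := fun v =>
    (hG.preconnected v u₀).eq_of_forall_adj ((transpose_edgeIncMatrix_mulVec_eq_zero_iff _).mp hz)
  have hsum := sum_edgeIncMatrix_mulVec z
  rw [Finset.sum_congr rfl fun v _ => hconst v, Finset.sum_const, Finset.card_univ, nsmul_eq_mul,
    ZMod.natCast_eq_one_iff_odd.mpr hodd, one_mul] at hsum
  exact funext fun v => (hconst v).trans hsum

theorem Connected.isUnit_transpose_mul_edgeIncMatrix_iff [DecidableEq G.edgeSet]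
    (hG : G.Connected) :
    IsUnit (G.edgeIncMatrixᵀ * G.edgeIncMatrix) ↔ G.IsTree ∧ Odd (Fintype.card V) := by
  have hcomp : (G.edgeIncMatrixᵀ * G.edgeIncMatrix).mulVec =
      G.edgeIncMatrixᵀ.mulVec ∘ G.edgeIncMatrix.mulVec :=
    funext fun z => (mulVec_mulVec z _ _).symm
  rw [← mulVec_injective_iff_isUnit, hcomp, isTree_iff, and_iff_right hG,
    isAcyclic_iff_injective_edgeIncMatrix_mulVec]
  constructor
  · intro hinj
    refine ⟨hinj.of_comp, Nat.not_even_iff_odd.mp fun heven => ?_⟩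
    obtain ⟨z, hz⟩ := hG.exists_edgeIncMatrix_mulVec_eq_one heven
    have hz0 : z = 0 := hinj <| by
      simp only [Function.comp_apply, hz, mulVec_zero]
      exact (transpose_edgeIncMatrix_mulVec_eq_zero_iff 1).mpr fun _ _ _ => rfl
    obtain ⟨u⟩ := hG.nonempty
    simpa [hz0] using congrFun hz u
  · rintro ⟨hinj, hodd⟩
    rw [← hcomp, ← coe_mulVecLin, injective_iff_map_eq_zero]
    intro z hz
    rw [mulVecLin_apply, ← mulVec_mulVec] at hz
    exact hinj ((hG.edgeIncMatrix_mulVec_eq_zero hodd hz).trans (mulVec_zero _).symm)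

end SimpleGraph

theorem stmt2_general {S : Type} [Fintype S] [DecidableEq S]
    (Γ : SimpleGraph S) [DecidableRel Γ.Adj] :
    ((∃ (U : Type) (_ : Fintype U) (G : SimpleGraph U),
        G.Connected ∧ Nonempty (Γ ≃g G.lineGraph)) ∧
      IsUnit (Γ.adjMatrix (ZMod 2)))
    ↔ ∃ (U : Type) (_ : Fintype U) (G : SimpleGraph U),
        G.IsTree ∧ Odd (Nat.card U) ∧ Nonempty (Γ ≃g G.lineGraph) := by
  classical
  have hunit_iff : ∀ {U : Type} [Fintype U] (G : SimpleGraph U), (Γ ≃g G.lineGraph) →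
      G.Connected → (IsUnit (Γ.adjMatrix (ZMod 2)) ↔ G.IsTree ∧ Odd (Nat.card U)) := by
    intro U _ G φ hG
    rw [← isUnit_submatrix_equiv (φ : S ≃ G.edgeSet).symm (φ : S ≃ G.edgeSet).symm,
      ← reindex_apply, φ.reindex_adjMatrix (α := ZMod 2), G.adjMatrix_lineGraph,
      hG.isUnit_transpose_mul_edgeIncMatrix_iff, Nat.card_eq_fintype_card]
  constructor
  · rintro ⟨⟨U, hU, G, hG, ⟨φ⟩⟩, hunit⟩
    obtain ⟨htree, hodd⟩ := (hunit_iff G φ hG).mp hunit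
    exact ⟨U, hU, G, htree, hodd, ⟨φ⟩⟩
  · rintro ⟨U, hU, G, htree, hodd, ⟨φ⟩⟩
    exact ⟨⟨U, hU, G, htree.connected, ⟨φ⟩⟩, (hunit_iff G φ htree.connected).mpr ⟨htree, hodd⟩⟩

/-- A finite simple connected graph `Γ` is a nondegenerate line graph
(i.e. `Γ` is the line graph of some connected graph and its adjacency matrix over `F₂`
is invertible) if and only if `Γ` is the line graph of a tree of odd order. -/
theorem stmt2 {S : Type} [Fintype S] [DecidableEq S]
    (Γ : SimpleGraph S) [DecidableRel Γ.Adj] (hconn : Γ.Connected) :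
    ((∃ (U : Type) (_ : Fintype U) (G : SimpleGraph U),
        G.Connected ∧ Nonempty (Γ ≃g G.lineGraph)) ∧
      IsUnit (Γ.adjMatrix (ZMod 2)))
    ↔ ∃ (U : Type) (_ : Fintype U) (G : SimpleGraph U),
        G.IsTree ∧ Odd (Nat.card U) ∧ Nonempty (Γ ≃g G.lineGraph) :=
  stmt2_general Γ
end

section
/- Let Γ = (S,R) be a finite simple connected bipartite nondegenerate graph in which every vertex has odd degree. Then Q(α_s^∨) = 1 for every s ∈ S, where Q is the quadratic form with Q(α_u) = 1 for all u and polarization equal to the adjacency symplectic form B, and {α_s^∨} is the dual basis. -/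
/-!
The dual basis vector `α_s^∨` is the solution `v` of `A v = e_s`, where `A` is the adjacency
matrix over `𝔽₂`. Since `A` swaps the two colour classes and is invertible, `v` is supported on
the colour class opposite to `s`; that class is independent, so the `e_t` in the support of `v`
are pairwise `B`-orthogonal and `Q v = ∑ₜ vₜ Q(e_t) = ∑ₜ vₜ`. Odd degrees give `A 𝟙 = 𝟙`, hence
`∑ₜ vₜ = 𝟙 ⬝ A v = 𝟙 ⬝ e_s = 1`.
-/

open Matrix

theorem map_sum_of_pairwise_polar_eq_zero {ι M R : Type*} [AddCommMonoid M] [AddCommGroup R]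
    (Q : M → R) (B : M → M →+ R) (hQ : ∀ x y, Q (x + y) = Q x + Q y + B x y)
    (s : Finset ι) (g : ι → M) (hg : (s : Set ι).Pairwise fun i j => B (g i) (g j) = 0) :
    Q (∑ i ∈ s, g i) = ∑ i ∈ s, Q (g i) := by
  classical
  induction s using Finset.induction_on with
  | empty => simpa using hQ 0 0
  | insert a s ha ih =>
    have horth : B (g a) (∑ i ∈ s, g i) = 0 := by
      rw [map_sum]
      exact Finset.sum_eq_zero fun i hi =>
        hg (by simp) (by simp [hi]) fun hai => ha (hai ▸ hi)
    rw [Finset.sum_insert ha, Finset.sum_insert ha, hQ, horth, add_zero,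
      ih (hg.mono (by simp))]

theorem Bool.eq_of_ne_of_ne {a b c : Bool} (ha : a ≠ c) (hb : b ≠ c) : a = b := by
  revert a b c; decide

namespace SimpleGraph

variable {S : Type*} [Fintype S] (G : SimpleGraph S) [DecidableRel G.Adj]

theorem adjMatrix_mulVec_one_of_odd_degree (hodd : ∀ s, Odd (G.degree s)) :
    G.adjMatrix (ZMod 2) *ᵥ 1 = 1 := by
  funext s
  rw [Pi.one_apply, ← Function.const_one, adjMatrix_mulVec_const_apply, mul_one,
    ZMod.natCast_eq_one_iff_odd]
  exact hodd s

theorem sum_eq_one_of_adjMatrix_mulVec_eq_single [DecidableEq S] (hodd : ∀ s, Odd (G.degree s))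
    {v : S → ZMod 2} {s : S} (hv : G.adjMatrix (ZMod 2) *ᵥ v = Pi.single s 1) :
    ∑ t, v t = 1 :=
  calc ∑ t, v t = (G.adjMatrix (ZMod 2) *ᵥ 1) ⬝ᵥ v := by
        rw [G.adjMatrix_mulVec_one_of_odd_degree hodd, one_dotProduct]
    _ = 1 ⬝ᵥ (G.adjMatrix (ZMod 2) *ᵥ v) := by
        rw [dotProduct_mulVec, ← mulVec_transpose, transpose_adjMatrix]
    _ = 1 := by simp [hv]

theorem adjMatrix_mulVec_apply_eq_zero {α : Type*} [NonAssocSemiring α] {x : S → α} {u : S}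
    (hx : ∀ t, G.Adj u t → x t = 0) : (G.adjMatrix α *ᵥ x) u = 0 := by
  rw [adjMatrix_mulVec_apply]
  exact Finset.sum_eq_zero fun t ht => hx t ((mem_neighborFinset G u t).mp ht)

theorem apply_eq_zero_of_adjMatrix_mulVec_eq_single [DecidableEq S] {K : Type*} [Field K]
    (C : G.Coloring Bool) (hA : IsUnit (G.adjMatrix K)) {v : S → K} {s : S}
    (hv : G.adjMatrix K *ᵥ v = Pi.single s 1) {t : S} (ht : C t = C s) : v t = 0 := by
  -- `A` maps each colour class to the other, so the part `w` of `v` on the class of `s` satisfies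
  -- `A w = 0`: on that class `A w = 0` trivially, on the other one `A w = A v = e_s = 0`.
  set w : S → K := fun t => if C t = C s then v t else 0
  have hw : G.adjMatrix K *ᵥ w = 0 := by
    funext u
    by_cases hu : C u = C s
    · exact G.adjMatrix_mulVec_apply_eq_zero fun t hut => if_neg (hu ▸ (C.valid hut).symm)
    · have hvw : ∀ t, G.Adj u t → w t = v t := fun t hut =>
        if_pos (Bool.eq_of_ne_of_ne (C.valid hut).symm (Ne.symm hu))
      rw [adjMatrix_mulVec_apply, Finset.sum_congr rfl fun t ht =>
        hvw t ((mem_neighborFinset G u t).mp ht), ← adjMatrix_mulVec_apply, hv,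
        Pi.single_eq_of_ne fun hus => hu (congrArg C hus), Pi.zero_apply]
  have : w = 0 := (mulVec_injective_iff_isUnit.mpr hA) (by rw [hw, mulVec_zero])
  simpa [w, ht] using congrFun this t

theorem quadratic_apply_eq_sum_of_vanishing_on_colorClass [DecidableEq S] (C : G.Coloring Bool)
    (Q : (S → ZMod 2) → ZMod 2)
    (hQ : ∀ x y, Q (x + y) = Q x + Q y + x ⬝ᵥ G.adjMatrix (ZMod 2) *ᵥ y)
    (hQone : ∀ u, Q (Pi.single u 1) = 1) {v : S → ZMod 2} {b : Bool}
    (hv : ∀ t, C t = b → v t = 0) : Q v = ∑ t, v t := by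
  set B : (S → ZMod 2) → (S → ZMod 2) →+ ZMod 2 := fun x =>
    (toLinearMap₂' (ZMod 2) (G.adjMatrix (ZMod 2)) x).toAddMonoidHom
  have hQB : ∀ x y, Q (x + y) = Q x + Q y + B x y := fun x y => by
    simp only [B, LinearMap.toAddMonoidHom_coe, toLinearMap₂'_apply', hQ]
  have hQsingle : ∀ t a, Q (Pi.single t a) = a := by
    intro t a
    obtain rfl | rfl : a = 0 ∨ a = 1 := by revert a; decide
    · simpa using hQ 0 0
    · exact hQone t
  have horth : (Set.univ : Set S).Pairwise fun t u =>
      B (Pi.single t (v t)) (Pi.single u (v u)) = 0 := by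
    intro t _ u _ htu
    by_cases hvt : v t = 0
    · simp [B, hvt]
    by_cases hvu : v u = 0
    · simp [B, hvu]
    have hC : C t = C u := Bool.eq_of_ne_of_ne (fun h => hvt (hv t h)) fun h => hvu (hv u h)
    have hnadj : ¬G.Adj t u := fun hadj => C.valid hadj hC
    simp [B, toLinearMap₂'_apply', single_dotProduct, mulVec_single, hnadj]
  conv_lhs => rw [← Finset.univ_sum_single v]
  rw [map_sum_of_pairwise_polar_eq_zero Q B hQB _ _ (by simpa using horth)]
  simp only [hQsingle]

end SimpleGraph

theorem stmt18_general {S : Type} [Fintype S] [DecidableEq S]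
    (Γ : SimpleGraph S) [DecidableRel Γ.Adj]
    (c : S → Bool) (hc : ∀ s t : S, Γ.Adj s t → c s ≠ c t)
    (hA : IsUnit (Γ.adjMatrix (ZMod 2)))
    (hodd : ∀ s : S, Odd (Γ.degree s))
    (B : (S → ZMod 2) → (S → ZMod 2) → ZMod 2)
    (hB : ∀ v w, B v w = v ⬝ᵥ (Γ.adjMatrix (ZMod 2)) *ᵥ w)
    (d : S → S → ZMod 2)
    (hd : ∀ s t : S, B (d s) (Pi.single t 1) = if s = t then 1 else 0)
    (Q : (S → ZMod 2) → ZMod 2)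
    (hQpolar : ∀ x y : S → ZMod 2, Q (x + y) = Q x + Q y + B x y)
    (hQone : ∀ u : S, Q (Pi.single u 1) = 1) :
    ∀ s : S, Q (d s) = 1 := by
  intro s
  have hds : Γ.adjMatrix (ZMod 2) *ᵥ d s = Pi.single s 1 := by
    funext t
    have hdst := hd s t
    rw [hB, dotProduct_mulVec, dotProduct_single, mul_one, ← mulVec_transpose,
      SimpleGraph.transpose_adjMatrix] at hdst
    rw [hdst, Pi.single_apply]
    exact if_congr eq_comm rfl rfl
  let C : Γ.Coloring Bool := SimpleGraph.Coloring.mk c fun h => hc _ _ h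
  rw [Γ.quadratic_apply_eq_sum_of_vanishing_on_colorClass C Q (fun x y => by rw [hQpolar, hB])
    hQone fun t ht => Γ.apply_eq_zero_of_adjMatrix_mulVec_eq_single C hA hds ht]
  exact Γ.sum_eq_one_of_adjMatrix_mulVec_eq_single hodd hds

/-- Let `Γ` be a finite simple connected bipartite nondegenerate graph in
which every vertex has odd degree. Then `Q(α_s^∨) = 1` for every vertex `s`, where `Q` is
the quadratic form with `Q(α_u) = 1` for all `u` and polarization the adjacency symplectic
form `B`, and `{α_s^∨}` is the dual basis. -/
theorem stmt18 {S : Type} [Fintype S] [DecidableEq S]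
    (Γ : SimpleGraph S) [DecidableRel Γ.Adj] (hconn : Γ.Connected)
    (c : S → Bool) (hc : ∀ s t : S, Γ.Adj s t → c s ≠ c t)
    (hA : IsUnit (Γ.adjMatrix (ZMod 2)))
    (hodd : ∀ s : S, Odd (Γ.degree s))
    (B : (S → ZMod 2) → (S → ZMod 2) → ZMod 2)
    (hB : ∀ v w, B v w = v ⬝ᵥ (Γ.adjMatrix (ZMod 2)) *ᵥ w)
    (d : S → S → ZMod 2)
    (hd : ∀ s t : S, B (d s) (Pi.single t 1) = if s = t then 1 else 0)
    (Q : (S → ZMod 2) → ZMod 2)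
    (hQpolar : ∀ x y : S → ZMod 2, Q (x + y) = Q x + Q y + B x y)
    (hQone : ∀ u : S, Q (Pi.single u 1) = 1) :
    ∀ s : S, Q (d s) = 1 :=
  stmt18_general Γ c hc hA hodd B hB d hd Q hQpolar hQone
end
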